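/- The matrix D_a^{-(e2-e3)/2} · γ(A,S) · D_a^{(e2-e3)/2} is a symmetric matrix; hence γ(A,S) is similar, via the real invertible diagonal matrix D_a^{(e2-e3)/2}, to a real symmetric matrix. -/
import Mathlib


open Matrix BigOperators Finset

/-- Degree of node `i`: the `i`-th row sum of the adjacency matrix `A`. -/
noncomputable def adjDeg {n : ℕ} (A : Matrix (Fin n) (Fin n) ℝ) (i : Fin n) : ℝ :=
  ∑ j, A i j

/-- The diagonal matrix `D_a^e` with diagonal entries `(d_i + a) ^ e` (real powers). -/
noncomputable def Dpow {n : ℕ} (A : Matrix (Fin n) (Fin n) ℝ) (a e : ℝ) :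
    Matrix (Fin n) (Fin n) ℝ :=
  Matrix.diagonal (fun i => (adjDeg A i + a) ^ e)

/-- The parametrised graph shift operator
`γ(A,S) = m1·D_a^{e1} + m2·D_a^{e2}·A_a·D_a^{e3} + m3·I_n`, where `A_a = A + a·I_n`. -/
noncomputable def pgso {n : ℕ} (A : Matrix (Fin n) (Fin n) ℝ)
    (m1 m2 m3 e1 e2 e3 a : ℝ) : Matrix (Fin n) (Fin n) ℝ :=
  m1 • Dpow A a e1
    + m2 • (Dpow A a e2 * (A + a • (1 : Matrix (Fin n) (Fin n) ℝ)) * Dpow A a e3)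
    + m3 • (1 : Matrix (Fin n) (Fin n) ℝ)

lemma Dpow_mul_Dpow {n : ℕ} (A : Matrix (Fin n) (Fin n) ℝ) (a : ℝ)
    (hdeg : ∀ i, 0 < adjDeg A i + a) (e f : ℝ) :
    Dpow A a e * Dpow A a f = Dpow A a (e + f) := by
  unfold Dpow
  rw [Matrix.diagonal_mul_diagonal]
  exact congrArg Matrix.diagonal (funext fun i => (Real.rpow_add (hdeg i) e f).symm)

lemma Dpow_zero {n : ℕ} (A : Matrix (Fin n) (Fin n) ℝ) (a : ℝ) :
    Dpow A a 0 = 1 := by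
  simp [Dpow]

lemma Dpow_transpose {n : ℕ} (A : Matrix (Fin n) (Fin n) ℝ) (a e : ℝ) :
    (Dpow A a e)ᵀ = Dpow A a e := Matrix.diagonal_transpose _


/-- `D_a^{-(e2-e3)/2} · γ(A,S) · D_a^{(e2-e3)/2}` is symmetric; hence `γ(A,S)` is similar,
via the real invertible diagonal matrix `D_a^{(e2-e3)/2}`, to a real symmetric matrix. -/
theorem pgso_similar_symmetric
    (n : ℕ) (hn : 0 < n) (A : Matrix (Fin n) (Fin n) ℝ)
    (hsymm : A.IsSymm) (hnonneg : ∀ i j, 0 ≤ A i j)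
    (m1 m2 m3 e1 e2 e3 a : ℝ) (hdeg : ∀ i, 0 < adjDeg A i + a) :
    (Dpow A a (-((e2 - e3) / 2)) * pgso A m1 m2 m3 e1 e2 e3 a
        * Dpow A a ((e2 - e3) / 2)).IsSymm ∧
    IsUnit (Dpow A a ((e2 - e3) / 2)) ∧
    pgso A m1 m2 m3 e1 e2 e3 a =
      Dpow A a ((e2 - e3) / 2) *
        (Dpow A a (-((e2 - e3) / 2)) * pgso A m1 m2 m3 e1 e2 e3 a
          * Dpow A a ((e2 - e3) / 2)) *
        (Dpow A a ((e2 - e3) / 2))⁻¹ := by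
  set c := (e2 - e3) / 2 with hc
  have hAa : (A + a • (1 : Matrix (Fin n) (Fin n) ℝ)).IsSymm := by
    unfold Matrix.IsSymm
    rw [Matrix.transpose_add, hsymm, Matrix.transpose_smul, Matrix.transpose_one]
  have hunit : IsUnit (Dpow A a c) := by
    rw [Matrix.isUnit_iff_isUnit_det]
    unfold Dpow
    rw [Matrix.det_diagonal]
    refine isUnit_iff_ne_zero.mpr (Finset.prod_ne_zero_iff.mpr fun i _ => ?_)
    exact ne_of_gt (Real.rpow_pos_of_pos (hdeg i) c)
  have hinv : Dpow A a c * Dpow A a (-c) = 1 := by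
    rw [Dpow_mul_Dpow A a hdeg, add_neg_cancel, Dpow_zero]
  have hinv' : Dpow A a (-c) * Dpow A a c = 1 := by
    rw [Dpow_mul_Dpow A a hdeg, neg_add_cancel, Dpow_zero]
  -- rewrite the conjugated matrix
  have key : Dpow A a (-c) * pgso A m1 m2 m3 e1 e2 e3 a * Dpow A a c =
      m1 • Dpow A a e1
        + m2 • (Dpow A a ((e2 + e3) / 2) * (A + a • (1 : Matrix (Fin n) (Fin n) ℝ))
            * Dpow A a ((e2 + e3) / 2))
        + m3 • (1 : Matrix (Fin n) (Fin n) ℝ) := by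
    unfold pgso
    rw [Matrix.mul_add, Matrix.mul_add, Matrix.add_mul, Matrix.add_mul]
    congr 1
    · congr 1
      · rw [Matrix.mul_smul, Matrix.smul_mul, Dpow_mul_Dpow A a hdeg]
        rw [show -c + e1 = e1 + -c from by ring, ← Dpow_mul_Dpow A a hdeg,
          Matrix.mul_assoc, hinv', Matrix.mul_one]
      · rw [Matrix.mul_smul, Matrix.smul_mul]
        congr 1
        rw [show Dpow A a (-c) * (Dpow A a e2 * (A + a • 1) * Dpow A a e3) * Dpow A a c
            = (Dpow A a (-c) * Dpow A a e2) * (A + a • 1) * (Dpow A a e3 * Dpow A a c)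
            from by noncomm_ring,
          Dpow_mul_Dpow A a hdeg, Dpow_mul_Dpow A a hdeg]
        congr 2 <;> · congr 1; rw [hc]; ring
    · rw [Matrix.mul_smul, Matrix.smul_mul, Matrix.mul_one, hinv']
  refine ⟨?_, hunit, ?_⟩
  · rw [key]
    unfold Matrix.IsSymm
    rw [Matrix.transpose_add, Matrix.transpose_add, Matrix.transpose_smul,
      Matrix.transpose_smul, Matrix.transpose_smul, Matrix.transpose_one,
      Dpow_transpose]
    congr 2
    rw [Matrix.transpose_mul, Matrix.transpose_mul, Dpow_transpose, hAa]
    noncomm_ring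
  · have h2 : Dpow A a c * (Dpow A a c)⁻¹ = 1 :=
      Matrix.mul_nonsing_inv _ (Matrix.isUnit_iff_isUnit_det _ |>.mp hunit)
    rw [show Dpow A a c * (Dpow A a (-c) * pgso A m1 m2 m3 e1 e2 e3 a * Dpow A a c)
        * (Dpow A a c)⁻¹
        = (Dpow A a c * Dpow A a (-c)) * pgso A m1 m2 m3 e1 e2 e3 a
          * (Dpow A a c * (Dpow A a c)⁻¹) from by noncomm_ring,
      hinv, h2, Matrix.one_mul, Matrix.mul_one]
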